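/- Let L > 0 and let u : T → ℝ be Lipschitz with modulus L with respect to the ℓ¹-norm, i.e., |u(x,y) − u(x′,y′)| ≤ L(|x−x′| + |y−y′|) for all (x,y),(x′,y′) ∈ T. Let u_N be the Type-1 piecewise linear function built from the grid values u_{i,j} := u(x_i,y_j). Then |u_N(x,y) − u(x,y)| ≤ L(β₁ + β₂) for every (x,y) ∈ T, where β₁ := max_{1≤i≤N₁−1}(x_{i+1}−x_i) and β₂ := max_{1≤j≤N₂−1}(y_{j+1}−y_j) are the mesh sizes. (This uniform bound is the key step, inequality (A.6), in the proof of Proposition 5.1(ii) of the paper.) -/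

import Mathlib

/-! On its cell, the Type-1 interpolant is a convex combination of the values of `u` at three
corners of the cell, with the barycentric coordinates of the point in its triangle as weights.
Every corner is within ℓ¹-distance `β₁ + β₂` of the point, so by the Lipschitz bound every corner
value, and hence every convex combination of them, is within `L (β₁ + β₂)` of `u p q`. -/

open Finset Set
open scoped Classical

noncomputable section

/-- Lower-triangle linear piece of the Type-1 PLA over cell `(i,j)`. -/
def u1l (x y : ℕ → ℝ) (u : ℕ → ℕ → ℝ) (i j : ℕ) (p q : ℝ) : ℝ :=
  ((x (i + 1) - p) / (x (i + 1) - x i)) * u i j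
    + ((p - x i) / (x (i + 1) - x i) - (q - y j) / (y (j + 1) - y j)) * u (i + 1) j
    + ((q - y j) / (y (j + 1) - y j)) * u (i + 1) (j + 1)

/-- Upper-triangle linear piece of the Type-1 PLA over cell `(i,j)`. -/
def u1u (x y : ℕ → ℝ) (u : ℕ → ℕ → ℝ) (i j : ℕ) (p q : ℝ) : ℝ :=
  ((y (j + 1) - q) / (y (j + 1) - y j)) * u i j
    + ((q - y j) / (y (j + 1) - y j) - (p - x i) / (x (i + 1) - x i)) * u i (j + 1)
    + ((p - x i) / (x (i + 1) - x i)) * u (i + 1) (j + 1)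

/-- Membership in the half-open interval `X_i` (closed at the left end for `i = 1`). -/
def memX (x : ℕ → ℝ) (i : ℕ) (p : ℝ) : Prop :=
  if i = 1 then x 1 ≤ p ∧ p ≤ x 2 else x i < p ∧ p ≤ x (i + 1)

/-- Membership in the cell `T_{i,j} = X_i × Y_j`. -/
def memCell (x y : ℕ → ℝ) (i j : ℕ) (p q : ℝ) : Prop :=
  memX x i p ∧ memX y j q

/-- The Type-1 piecewise linear function built from the grid values `u i j`. -/
def uPL (N₁ N₂ : ℕ) (x y : ℕ → ℝ) (u : ℕ → ℕ → ℝ) (p q : ℝ) : ℝ :=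
  ∑ i ∈ Finset.Icc 1 (N₁ - 1), ∑ j ∈ Finset.Icc 1 (N₂ - 1),
    if memCell x y i j p q then
      (if (q - y j) * (x (i + 1) - x i) ≤ (p - x i) * (y (j + 1) - y j)
        then u1l x y u i j p q else u1u x y u i j p q)
    else 0

theorem strictMonoOn_Icc_of_lt_add_one {α : Type*} [Preorder α] {x : ℕ → α} {N : ℕ}
    (hx : ∀ i, 1 ≤ i → i < N → x i < x (i + 1)) : StrictMonoOn x (Set.Icc 1 N) :=
  strictMonoOn_of_lt_succ Set.ordConnected_Icc fun a _ ha hsa => hx a ha.1 hsa.2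

theorem memX.mem_Icc {x : ℕ → ℝ} {i : ℕ} {p : ℝ} (h : memX x i p) :
    p ∈ Set.Icc (x i) (x (i + 1)) := by
  unfold memX at h
  split_ifs at h with hi
  · subst hi; exact h
  · exact ⟨h.1.le, h.2⟩

theorem exists_memX {x : ℕ → ℝ} {N : ℕ} (hN : 2 ≤ N) {p : ℝ} (hp : p ∈ Set.Icc (x 1) (x N)) :
    ∃ i ∈ Finset.Icc 1 (N - 1), memX x i p := by
  induction N, hN using Nat.le_induction with
  | base => exact ⟨1, by simp, by simpa [memX] using hp⟩
  | succ N hN ih =>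
    by_cases hpN : p ≤ x N
    · obtain ⟨i, hi, hpi⟩ := ih ⟨hp.1, hpN⟩
      exact ⟨i, by simp only [Finset.mem_Icc] at hi ⊢; omega, hpi⟩
    · refine ⟨N, by simp only [Finset.mem_Icc]; omega, ?_⟩
      rw [memX, if_neg (by omega)]
      exact ⟨not_le.mp hpN, hp.2⟩

theorem not_lt_of_memX_of_memX {x : ℕ → ℝ} {N : ℕ} (hx : MonotoneOn x (Set.Icc 1 N))
    {p : ℝ} {a b : ℕ} (ha : 1 ≤ a) (hb : b ≤ N - 1) (hpa : memX x a p) (hpb : memX x b p) :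
    ¬ a < b := by
  intro hab
  have hpb' : x b < p := by
    rw [memX, if_neg (by omega)] at hpb
    exact hpb.1
  have : x (a + 1) ≤ x b := hx ⟨by omega, by omega⟩ ⟨by omega, by omega⟩ hab
  linarith [hpa.mem_Icc.2]

theorem memX_unique {x : ℕ → ℝ} {N : ℕ} (hx : MonotoneOn x (Set.Icc 1 N)) {p : ℝ} {a b : ℕ}
    (ha : a ∈ Finset.Icc 1 (N - 1)) (hb : b ∈ Finset.Icc 1 (N - 1))
    (hpa : memX x a p) (hpb : memX x b p) : a = b := by
  rw [Finset.mem_Icc] at ha hb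
  exact le_antisymm (not_lt.mp (not_lt_of_memX_of_memX hx hb.1 ha.2 hpb hpa))
    (not_lt.mp (not_lt_of_memX_of_memX hx ha.1 hb.2 hpa hpb))

theorem abs_convexComb_three_sub_le {a b c v₀ v₁ v₂ w M : ℝ} (ha : 0 ≤ a) (hb : 0 ≤ b)
    (hc : 0 ≤ c) (habc : a + b + c = 1)
    (h₀ : |v₀ - w| ≤ M) (h₁ : |v₁ - w| ≤ M) (h₂ : |v₂ - w| ≤ M) :
    |a * v₀ + b * v₁ + c * v₂ - w| ≤ M :=
  calc |a * v₀ + b * v₁ + c * v₂ - w|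
      = |a * (v₀ - w) + b * (v₁ - w) + c * (v₂ - w)| := by
        congr 1; linear_combination w * habc
    _ ≤ |a * (v₀ - w)| + |b * (v₁ - w)| + |c * (v₂ - w)| := abs_add_three _ _ _
    _ = a * |v₀ - w| + b * |v₁ - w| + c * |v₂ - w| := by
        rw [abs_mul, abs_mul, abs_mul, abs_of_nonneg ha, abs_of_nonneg hb, abs_of_nonneg hc]
    _ ≤ a * M + b * M + c * M := by gcongr
    _ = M := by rw [← add_mul, ← add_mul, habc, one_mul]

def u1 (x y : ℕ → ℝ) (u : ℕ → ℕ → ℝ) (i j : ℕ) (p q : ℝ) : ℝ :=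
  if (q - y j) * (x (i + 1) - x i) ≤ (p - x i) * (y (j + 1) - y j)
    then u1l x y u i j p q else u1u x y u i j p q

theorem uPL_eq_u1 {N₁ N₂ : ℕ} {x y : ℕ → ℝ} (u : ℕ → ℕ → ℝ) (hx : MonotoneOn x (Set.Icc 1 N₁))
    (hy : MonotoneOn y (Set.Icc 1 N₂)) {i j : ℕ} (hi : i ∈ Finset.Icc 1 (N₁ - 1))
    (hj : j ∈ Finset.Icc 1 (N₂ - 1)) {p q : ℝ} (hpq : memCell x y i j p q) :
    uPL N₁ N₂ x y u p q = u1 x y u i j p q := by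
  unfold uPL
  rw [Finset.sum_eq_single_of_mem i hi, Finset.sum_eq_single_of_mem j hj, if_pos hpq, u1]
  · exact fun b hb hbj => if_neg fun h => hbj (memX_unique hy hb hj h.2 hpq.2)
  · exact fun a ha hai => Finset.sum_eq_zero fun b _ =>
      if_neg fun h => hai (memX_unique hx ha hi h.1 hpq.1)

section Triangle

variable {x y : ℕ → ℝ} {u : ℕ → ℕ → ℝ} {i j : ℕ} {p q w M : ℝ}

theorem abs_u1l_sub_le (hx : x i < x (i + 1)) (hy : y j < y (j + 1)) (hp : p ≤ x (i + 1))
    (hq : y j ≤ q) (hlow : (q - y j) * (x (i + 1) - x i) ≤ (p - x i) * (y (j + 1) - y j))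
    (h₀ : |u i j - w| ≤ M) (h₁ : |u (i + 1) j - w| ≤ M) (h₂ : |u (i + 1) (j + 1) - w| ≤ M) :
    |u1l x y u i j p q - w| ≤ M := by
  have hh : 0 < x (i + 1) - x i := sub_pos.2 hx
  have hk : 0 < y (j + 1) - y j := sub_pos.2 hy
  refine abs_convexComb_three_sub_le ?_ ?_ ?_ ?_ h₀ h₁ h₂
  · exact div_nonneg (sub_nonneg.2 hp) hh.le
  · rwa [sub_nonneg, div_le_div_iff₀ hk hh]
  · exact div_nonneg (sub_nonneg.2 hq) hk.le
  · field_simp; ring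

theorem abs_u1u_sub_le (hx : x i < x (i + 1)) (hy : y j < y (j + 1)) (hp : x i ≤ p)
    (hq : q ≤ y (j + 1)) (hup : (p - x i) * (y (j + 1) - y j) ≤ (q - y j) * (x (i + 1) - x i))
    (h₀ : |u i j - w| ≤ M) (h₁ : |u i (j + 1) - w| ≤ M) (h₂ : |u (i + 1) (j + 1) - w| ≤ M) :
    |u1u x y u i j p q - w| ≤ M := by
  have hh : 0 < x (i + 1) - x i := sub_pos.2 hx
  have hk : 0 < y (j + 1) - y j := sub_pos.2 hy
  refine abs_convexComb_three_sub_le ?_ ?_ ?_ ?_ h₀ h₁ h₂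
  · exact div_nonneg (sub_nonneg.2 hq) hk.le
  · rwa [sub_nonneg, div_le_div_iff₀ hh hk]
  · exact div_nonneg (sub_nonneg.2 hp) hh.le
  · field_simp; ring

theorem abs_u1_sub_le (hx : x i < x (i + 1)) (hy : y j < y (j + 1))
    (hp : p ∈ Set.Icc (x i) (x (i + 1))) (hq : q ∈ Set.Icc (y j) (y (j + 1)))
    (hcorner : ∀ a ∈ ({i, i + 1} : Finset ℕ), ∀ b ∈ ({j, j + 1} : Finset ℕ), |u a b - w| ≤ M) :
    |u1 x y u i j p q - w| ≤ M := by
  unfold u1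
  split_ifs with hlow
  · exact abs_u1l_sub_le hx hy hp.2 hq.1 hlow (hcorner _ (by simp) _ (by simp))
      (hcorner _ (by simp) _ (by simp)) (hcorner _ (by simp) _ (by simp))
  · exact abs_u1u_sub_le hx hy hp.1 hq.2 (not_le.mp hlow).le (hcorner _ (by simp) _ (by simp))
      (hcorner _ (by simp) _ (by simp)) (hcorner _ (by simp) _ (by simp))

end Triangle

theorem abs_sub_le_sup'_of_mem_Icc {x : ℕ → ℝ} {N i a : ℕ} {p : ℝ}
    (hi : i ∈ Finset.Icc 1 (N - 1)) (ha : a ∈ ({i, i + 1} : Finset ℕ))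
    (hp : p ∈ Set.Icc (x i) (x (i + 1))) :
    |x a - p| ≤ (Finset.Icc 1 (N - 1)).sup' ⟨i, hi⟩ fun i => x (i + 1) - x i := by
  have hxa : x a ∈ Set.Icc (x i) (x (i + 1)) := by
    simp only [Finset.mem_insert, Finset.mem_singleton] at ha
    rcases ha with rfl | rfl
    exacts [Set.left_mem_Icc.2 (hp.1.trans hp.2), Set.right_mem_Icc.2 (hp.1.trans hp.2)]
  exact (Real.dist_le_of_mem_Icc hxa hp).trans (Finset.le_sup' (fun i => x (i + 1) - x i) hi)

/-- Uniform error bound for the Type-1 piecewise linear approximation of an ℓ¹-Lipschitz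
function: `|u_N − u| ≤ L (β₁ + β₂)` on `T`, where `β₁, β₂` are the mesh sizes
(inequality (A.6) in the proof of Proposition 5.1(ii)). -/
theorem type1_PLA_uniform_error_bound
    (N₁ N₂ : ℕ) (hN₁ : 2 ≤ N₁) (hN₂ : 2 ≤ N₂)
    (x y : ℕ → ℝ)
    (hx : ∀ i, 1 ≤ i → i < N₁ → x i < x (i + 1))
    (hy : ∀ j, 1 ≤ j → j < N₂ → y j < y (j + 1))
    (L : ℝ) (hL : 0 < L)
    (u : ℝ → ℝ → ℝ)
    (hlip : ∀ p p' q q', p ∈ Set.Icc (x 1) (x N₁) → p' ∈ Set.Icc (x 1) (x N₁) →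
      q ∈ Set.Icc (y 1) (y N₂) → q' ∈ Set.Icc (y 1) (y N₂) →
      |u p q - u p' q'| ≤ L * (|p - p'| + |q - q'|)) :
    let β₁ := (Finset.Icc 1 (N₁ - 1)).sup' (Finset.nonempty_Icc.mpr (by omega))
      (fun i => x (i + 1) - x i)
    let β₂ := (Finset.Icc 1 (N₂ - 1)).sup' (Finset.nonempty_Icc.mpr (by omega))
      (fun j => y (j + 1) - y j)
    ∀ p ∈ Set.Icc (x 1) (x N₁), ∀ q ∈ Set.Icc (y 1) (y N₂),
      |uPL N₁ N₂ x y (fun i j => u (x i) (y j)) p q - u p q| ≤ L * (β₁ + β₂) := by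
  intro β₁ β₂ p hp q hq
  have hxm := (strictMonoOn_Icc_of_lt_add_one hx).monotoneOn
  have hym := (strictMonoOn_Icc_of_lt_add_one hy).monotoneOn
  obtain ⟨i, hi, hpi⟩ := exists_memX hN₁ hp
  obtain ⟨j, hj, hqj⟩ := exists_memX hN₂ hq
  have hi' := Finset.mem_Icc.mp hi
  have hj' := Finset.mem_Icc.mp hj
  rw [uPL_eq_u1 _ hxm hym hi hj ⟨hpi, hqj⟩]
  refine abs_u1_sub_le (hx i hi'.1 (by omega)) (hy j hj'.1 (by omega)) hpi.mem_Icc hqj.mem_Icc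
    fun a ha b hb => ?_
  have haN : a ∈ Set.Icc 1 N₁ := by simp only [Finset.mem_insert, Finset.mem_singleton] at ha; grind
  have hbN : b ∈ Set.Icc 1 N₂ := by simp only [Finset.mem_insert, Finset.mem_singleton] at hb; grind
  calc |u (x a) (y b) - u p q|
      ≤ L * (|x a - p| + |y b - q|) :=
        hlip _ _ _ _ (hxm.mapsTo_Icc haN) hp (hym.mapsTo_Icc hbN) hq
    _ ≤ L * (β₁ + β₂) := by
        gcongr
        exacts [abs_sub_le_sup'_of_mem_Icc hi ha hpi.mem_Icc,
          abs_sub_le_sup'_of_mem_Icc hj hb hqj.mem_Icc]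

end
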